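/- For any trace σ and any downward-closed (w.r.t. ≤_SHB) set S ⊆ Events(σ), the sequence ρ obtained by listing S in trace order of σ is a correct reordering of σ. -/

import Mathlib

/- A model of concurrent program traces: events are read/write/acquire/release
operations performed by threads; a trace is a finite sequence of events,
identified by their indices. -/

inductive Op where
  | read  (x : ℕ)
  | write (x : ℕ)
  | acq (l : ℕ)
  | rel (l : ℕ)
deriving DecidableEq

structure Event where
  thread : ℕ
  op : Op
deriving DecidableEq

def evAt (σ : List Event) (i : ℕ) : Event := σ.getD i ⟨0, Op.read 0⟩

def threadOf (σ : List Event) (i : ℕ) : ℕ := (evAt σ i).thread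

def isAcq (σ : List Event) (l i : ℕ) : Prop := i < σ.length ∧ (evAt σ i).op = Op.acq l
def isRel (σ : List Event) (l i : ℕ) : Prop := i < σ.length ∧ (evAt σ i).op = Op.rel l
def isRead (σ : List Event) (x i : ℕ) : Prop := i < σ.length ∧ (evAt σ i).op = Op.read x
def isWrite (σ : List Event) (x i : ℕ) : Prop := i < σ.length ∧ (evAt σ i).op = Op.write x

/-- `e` is an event on lock `l` (an acquire or release of `l`). -/
def onLock (l : ℕ) (e : Event) : Bool := decide (e.op = Op.acq l ∨ e.op = Op.rel l)

/-- Thread order: `i` and `j` are events of the same thread with `i` not after `j`. -/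
def TO (σ : List Event) (i j : ℕ) : Prop :=
  i ≤ j ∧ j < σ.length ∧ threadOf σ i = threadOf σ j

/-- Alternating sequence of matched acquire/release pairs on lock `l`, each pair
performed by a single thread, with at most one unmatched acquire at the end. -/
inductive LockAlt (l : ℕ) : List Event → Prop
  | nil : LockAlt l []
  | pending (t : ℕ) : LockAlt l [⟨t, Op.acq l⟩]
  | pair (t : ℕ) {rest : List Event} : LockAlt l rest →
      LockAlt l (⟨t, Op.acq l⟩ :: ⟨t, Op.rel l⟩ :: rest)

/-- Well-formedness of an event sequence: for each lock, the projection alternates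
matched acquire/release pairs, with at most one pending acquire. -/
def WellFormedEvents (es : List Event) : Prop := ∀ l, LockAlt l (es.filter (onLock l))

/-- Words of the language `(Σ_t ⟨t, acq(l)⟩ · ⟨t, rel(l)⟩)*`. -/
inductive PairsLang (l : ℕ) : List Event → Prop
  | nil : PairsLang l []
  | pair (t : ℕ) {rest : List Event} : PairsLang l rest →
      PairsLang l (⟨t, Op.acq l⟩ :: ⟨t, Op.rel l⟩ :: rest)

/-- Lock semantics: for every lock `l`, the projection of the trace onto events on `l`
is a prefix of a word in the language `(Σ_t ⟨t, acq(l)⟩ · ⟨t, rel(l)⟩)*`. -/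
def LockSem (σ : List Event) : Prop :=
  ∀ l, ∃ w, PairsLang l w ∧ (σ.filter (onLock l)) <+: w

/-- Thread `t` holds lock `l` after the prefix of length `n`: the last event of the
prefix on lock `l` is an acquire of `l` by `t`. -/
def Holds (σ : List Event) (n t l : ℕ) : Prop :=
  ∃ i, i < n ∧ isAcq σ l i ∧ threadOf σ i = t ∧
    ∀ j, i < j → j < n → j < σ.length → onLock l (evAt σ j) = false

/-- `r` is the matching release of the acquire `a`: same thread, same lock, with no
intervening event on that lock in between. -/
def MatchRel (σ : List Event) (a r : ℕ) : Prop :=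
  ∃ l, isAcq σ l a ∧ isRel σ l r ∧ a < r ∧ threadOf σ a = threadOf σ r ∧
    ∀ k, a < k → k < r → ¬ (isAcq σ l k ∨ isRel σ l k)

/-- `i` is the last write (on the common variable) before the read `j` in `σ`. -/
def LastWrite (σ : List Event) (i j : ℕ) : Prop :=
  ∃ x, isWrite σ x i ∧ isRead σ x j ∧ i < j ∧ ∀ k, i < k → k < j → ¬ isWrite σ x k

/-- `i` is the immediate thread-order predecessor of `j` in `σ`. -/
def Prev (σ : List Event) (j i : ℕ) : Prop :=
  i < j ∧ j < σ.length ∧ threadOf σ i = threadOf σ j ∧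
    ∀ k, i < k → k < j → threadOf σ k ≠ threadOf σ j

/-- `S` is downward-closed with respect to thread order. -/
def TODownClosed (σ : List Event) (S : Set ℕ) : Prop :=
  ∀ i j, TO σ i j → j ∈ S → i ∈ S

/-- `S` is `(TO, lw)`-closed. -/
def TOLWClosed (σ : List Event) (S : Set ℕ) : Prop :=
  TODownClosed σ S ∧ ∀ i j, LastWrite σ i j → j ∈ S → i ∈ S

/-- `S` is sync-preserving closed. -/
def SPClosed (σ : List Event) (S : Set ℕ) : Prop :=
  TOLWClosed σ S ∧
    ∀ l a1 a2 r1, isAcq σ l a1 → isAcq σ l a2 → a1 < a2 →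
      a1 ∈ S → a2 ∈ S → MatchRel σ a1 r1 → r1 ∈ S

/-- The sync-preserving closure of `S`. -/
def SPClosure (σ : List Event) (S : Set ℕ) : Set ℕ :=
  ⋂₀ {S' : Set ℕ | S ⊆ S' ∧ SPClosed σ S'}

def PrevSet (σ : List Event) (j : ℕ) : Set ℕ := {i | Prev σ j i}

def SPIdeal (σ : List Event) (e1 e2 : ℕ) : Set ℕ :=
  SPClosure σ (PrevSet σ e1 ∪ PrevSet σ e2)

/-- `i` occurs before `j` in the reordering `ρ` (a list of σ-indices). -/
def RBefore (ρ : List ℕ) (i j : ℕ) : Prop :=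
  i ∈ ρ ∧ j ∈ ρ ∧ ρ.idxOf i < ρ.idxOf j

/-- `i` is the last write before the read `j` in the reordering `ρ`. -/
def LastWriteIn (σ : List Event) (ρ : List ℕ) (i j : ℕ) : Prop :=
  ∃ x, isWrite σ x i ∧ isRead σ x j ∧ RBefore ρ i j ∧
    ∀ k, isWrite σ x k → ¬ (RBefore ρ i k ∧ RBefore ρ k j)

/-- `ρ` (a duplicate-free list of σ-indices, read as a trace) is a correct reordering
of `σ`: a well-formed trace over a subset of events of `σ` that is downward-closed
under thread order, respects thread order, and in which every read observes the
same last write as in `σ`. -/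
def CorrectReordering (σ : List Event) (ρ : List ℕ) : Prop :=
  ρ.Nodup ∧ (∀ i ∈ ρ, i < σ.length) ∧
  WellFormedEvents (ρ.map (evAt σ)) ∧
  (∀ i j, TO σ i j → j ∈ ρ → i ∈ ρ) ∧
  (∀ i j, i ∈ ρ → j ∈ ρ → i ≠ j → TO σ i j → RBefore ρ i j) ∧
  (∀ j x, isRead σ x j → j ∈ ρ → ∀ i, LastWriteIn σ ρ i j ↔ LastWrite σ i j)

/-- Event `e` of `σ` is σ-enabled in the reordering `ρ`. -/
def EnabledIn (σ : List Event) (ρ : List ℕ) (e : ℕ) : Prop :=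
  e < σ.length ∧ e ∉ ρ ∧ ∀ i, i ≠ e → TO σ i e → i ∈ ρ

/-- `ρ` is sync-preserving w.r.t. `σ`: any two same-lock acquires occurring in `ρ`
appear in the same relative order as in `σ`. -/
def SyncPreserving (σ : List Event) (ρ : List ℕ) : Prop :=
  ∀ l a1 a2, isAcq σ l a1 → isAcq σ l a2 → a1 ∈ ρ → a2 ∈ ρ →
    (RBefore ρ a1 a2 ↔ a1 < a2)

/-- Conflicting events: different threads, common variable, at least one write. -/
def Conflict (σ : List Event) (i j : ℕ) : Prop :=
  i < σ.length ∧ j < σ.length ∧ threadOf σ i ≠ threadOf σ j ∧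
    ∃ x, (isWrite σ x i ∧ (isWrite σ x j ∨ isRead σ x j)) ∨
         (isRead σ x i ∧ isWrite σ x j)

/-- `(e1, e2)` is a sync-preserving race of `σ`. -/
def SPRace (σ : List Event) (e1 e2 : ℕ) : Prop :=
  Conflict σ e1 e2 ∧ ∃ ρ : List ℕ, CorrectReordering σ ρ ∧ SyncPreserving σ ρ ∧
    EnabledIn σ ρ e1 ∧ EnabledIn σ ρ e2

/-- Happens-before: smallest transitive relation containing thread order and
ordering each release of a lock before every later acquire of that lock. -/
inductive HB (σ : List Event) : ℕ → ℕ → Prop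
  | to {i j : ℕ} : TO σ i j → HB σ i j
  | relacq {l i j : ℕ} : isRel σ l i → isAcq σ l j → i < j → HB σ i j
  | trans {i j k : ℕ} : HB σ i j → HB σ j k → HB σ i k

/-- Schedulable-happens-before: smallest transitive relation containing HB and
ordering each write of a variable before every later read of that variable. -/
inductive SHB (σ : List Event) : ℕ → ℕ → Prop
  | hb {i j : ℕ} : HB σ i j → SHB σ i j
  | wr {x i j : ℕ} : isWrite σ x i → isRead σ x j → i < j → SHB σ i j
  | trans {i j k : ℕ} : SHB σ i j → SHB σ j k → SHB σ i k

/-! Listing `S` in trace order keeps thread order, and since `S` contains every write that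
precedes one of its reads, each read keeps its last write. For the lock discipline, consecutive
events on a lock `l` are happens-before ordered (an acquire precedes its release in thread order,
a release precedes the next acquire), so the events on `l` form an HB-chain and those lying in
the HB-closed set `S` form a prefix of it; a prefix of a word of `(acq · rel)*` alternates. -/

namespace List

theorem SortedLT.idxOf_lt_idxOf_iff {α : Type*} [Preorder α] [DecidableEq α] {l : List α}
    (H : l.SortedLT) {a b : α} (ha : a ∈ l) (hb : b ∈ l) :
    l.idxOf a < l.idxOf b ↔ a < b :=
  (H.getIso l).symm.lt_iff_lt (x := ⟨a, ha⟩) (y := ⟨b, hb⟩)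

theorem filter_prefix_of_pairwise {α : Type*} {p : α → Bool} {l : List α}
    (h : l.Pairwise fun a b => p b → p a) : l.filter p <+: l := by
  induction l with
  | nil => simp
  | cons a l ih =>
    rw [pairwise_cons] at h
    by_cases ha : p a
    · rw [filter_cons_of_pos ha]
      exact (prefix_cons_inj a).2 (ih h.2)
    · rw [filter_cons_of_neg ha, filter_eq_nil_iff.2 fun b hb hpb => ha (h.1 b hb hpb)]
      exact nil_prefix

end List

open List

theorem rBefore_iff_of_sortedLT {ρ : List ℕ} (hρ : ρ.SortedLT) {i j : ℕ} :
    RBefore ρ i j ↔ i ∈ ρ ∧ j ∈ ρ ∧ i < j :=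
  ⟨fun ⟨hi, hj, hij⟩ => ⟨hi, hj, (hρ.idxOf_lt_idxOf_iff hi hj).1 hij⟩,
    fun ⟨hi, hj, hij⟩ => ⟨hi, hj, (hρ.idxOf_lt_idxOf_iff hi hj).2 hij⟩⟩

theorem lastWriteIn_iff_lastWrite {σ : List Event} {ρ : List ℕ} (hρ : ρ.SortedLT)
    (hwr : ∀ x i j, isWrite σ x i → isRead σ x j → i < j → j ∈ ρ → i ∈ ρ)
    {i j : ℕ} (hj : j ∈ ρ) : LastWriteIn σ ρ i j ↔ LastWrite σ i j := by
  simp only [LastWriteIn, LastWrite, rBefore_iff_of_sortedLT hρ]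
  constructor
  · rintro ⟨x, hwi, hrj, ⟨hi, -, hij⟩, hlast⟩
    refine ⟨x, hwi, hrj, hij, fun k hik hkj hwk => ?_⟩
    have hk := hwr x k j hwk hrj hkj hj
    exact hlast k hwk ⟨⟨hi, hk, hik⟩, hk, hj, hkj⟩
  · rintro ⟨x, hwi, hrj, hij, hlast⟩
    exact ⟨x, hwi, hrj, ⟨hwr x i j hwi hrj hij hj, hj, hij⟩,
      fun k hwk ⟨⟨_, _, hik⟩, _, _, hkj⟩ => hlast k hik hkj hwk⟩

theorem PairsLang.lockAlt_of_prefix {l : ℕ} {u w : List Event} (hw : PairsLang l w)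
    (hu : u <+: w) : LockAlt l u := by
  induction hw generalizing u with
  | nil => rw [prefix_nil.1 hu]; exact .nil
  | pair t _ ih =>
    rcases u with _ | ⟨a, _ | ⟨r, u⟩⟩
    · exact .nil
    · obtain ⟨rfl, -⟩ := cons_prefix_cons.1 hu
      exact .pending t
    · obtain ⟨rfl, rfl, hu'⟩ := cons_prefix_cons.1 hu |>.imp_right cons_prefix_cons.1
      exact .pair t (ih hu')

theorem PairsLang.head_op_eq_acq {l : ℕ} {e : Event} {u : List Event}
    (h : PairsLang l (e :: u)) : e.op = Op.acq l := by
  cases h; rfl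

instance (σ : List Event) : Trans (HB σ) (HB σ) (HB σ) := ⟨HB.trans⟩

def lockEvents (σ : List Event) (l : ℕ) : List ℕ :=
  (range σ.length).filter fun i => onLock l (evAt σ i)

theorem map_evAt_range (σ : List Event) : (range σ.length).map (evAt σ) = σ := by
  refine ext_getElem (by simp) fun i hi _ => ?_
  simp only [getElem_map, getElem_range, evAt]
  exact getD_eq_getElem σ _ (by simpa using hi)

theorem map_evAt_lockEvents (σ : List Event) (l : ℕ) :
    (lockEvents σ l).map (evAt σ) = σ.filter (onLock l) := by
  conv_rhs => rw [← map_evAt_range σ]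
  rw [filter_map]
  rfl

theorem PairsLang.isChain_HB_of_map_evAt_prefix {σ : List Event} {l : ℕ} {w : List Event}
    (hw : PairsLang l w) {L : List ℕ} (hL : L <+ range σ.length) (hpre : L.map (evAt σ) <+: w) :
    L.IsChain (HB σ) := by
  induction hw generalizing L with
  | nil => rw [prefix_nil, map_eq_nil_iff] at hpre; simp [hpre]
  | pair t hrest ih =>
    rcases L with _ | ⟨a, _ | ⟨r, L⟩⟩
    · exact .nil
    · exact .singleton a
    obtain ⟨ha, hr, hpre⟩ := cons_prefix_cons.1 hpre |>.imp_right cons_prefix_cons.1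
    have hlt : a < r := (pairwise_cons.1 (pairwise_lt_range.sublist hL)).1 r mem_cons_self
    have hmem : ∀ k ∈ a :: r :: L, k < σ.length := fun k hk => mem_range.1 (hL.subset hk)
    have hrL : r :: L <+ range σ.length := (sublist_cons_self a _).trans hL
    have hart : HB σ a r := .to ⟨hlt.le, hmem r (by simp), by simp [threadOf, ha, hr]⟩
    rcases L with _ | ⟨b, L⟩
    · exact .cons_cons hart (.singleton r)
    have hb : (evAt σ b).op = Op.acq l := by
      obtain ⟨rest', hrest'⟩ := hpre
      exact PairsLang.head_op_eq_acq (hrest' ▸ hrest)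
    have hrb : HB σ r b := .relacq ⟨hmem r (by simp), by simp [hr]⟩ ⟨hmem b (by simp), hb⟩
      ((pairwise_cons.1 (pairwise_lt_range.sublist hrL)).1 b mem_cons_self)
    exact .cons_cons hart (.cons_cons hrb (ih ((sublist_cons_self r _).trans hrL) hpre))

theorem pairwise_HB_lockEvents {σ : List Event} (hσ : LockSem σ) (l : ℕ) :
    (lockEvents σ l).Pairwise (HB σ) := by
  obtain ⟨w, hw, hpre⟩ := hσ l
  exact (hw.isChain_HB_of_map_evAt_prefix filter_sublist
    (map_evAt_lockEvents σ l ▸ hpre)).pairwise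

theorem wellFormedEvents_of_HB_closed {σ : List Event} (hσ : LockSem σ) {S : Set ℕ}
    [DecidablePred (· ∈ S)] (hS : ∀ i j, HB σ i j → j ∈ S → i ∈ S) :
    WellFormedEvents (((range σ.length).filter fun i => decide (i ∈ S)).map (evAt σ)) := by
  intro l
  obtain ⟨w, hw, hpre⟩ := hσ l
  have hproj :
      (((range σ.length).filter fun i => decide (i ∈ S)).map (evAt σ)).filter (onLock l) =
        ((lockEvents σ l).filter fun i => decide (i ∈ S)).map (evAt σ) := by
    rw [filter_map, lockEvents, filter_filter, filter_filter]
    congr 1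
    exact filter_congr fun i _ => Bool.and_comm _ _
  have hSpre : (lockEvents σ l).filter (fun i => decide (i ∈ S)) <+: lockEvents σ l :=
    filter_prefix_of_pairwise <| (pairwise_HB_lockEvents hσ l).imp fun hij hj => by
      simpa using hS _ _ hij (by simpa using hj)
  rw [hproj]
  exact hw.lockAlt_of_prefix ((hSpre.map _).trans (map_evAt_lockEvents σ l ▸ hpre))

/-- for any downward-closed (w.r.t. SHB) set `S` of events of `σ`,
listing `S` in trace order of `σ` yields a correct reordering of `σ`. -/
theorem stmt17 (σ : List Event) (hWF : LockSem σ) (S : Set ℕ)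
    [DecidablePred (· ∈ S)] (hSub : ∀ i ∈ S, i < σ.length)
    (hdc : ∀ i j, SHB σ i j → j ∈ S → i ∈ S) :
    CorrectReordering σ ((List.range σ.length).filter (fun i => decide (i ∈ S))) := by
  set ρ := (List.range σ.length).filter (fun i => decide (i ∈ S))
  have hmem : ∀ {i}, i ∈ ρ ↔ i ∈ S := fun {i} => by simpa [ρ] using hSub i
  have hsorted : ρ.SortedLT := (pairwise_lt_range.filter _).sortedLT
  have hwr : ∀ x i j, isWrite σ x i → isRead σ x j → i < j → j ∈ ρ → i ∈ ρ :=
    fun x i j hw hr hij hj => hmem.2 (hdc i j (.wr hw hr hij) (hmem.1 hj))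
  exact ⟨hsorted.nodup, fun i hi => hSub i (hmem.1 hi),
    wellFormedEvents_of_HB_closed hWF fun i j hij => hdc i j (.hb hij),
    fun i j hij hj => hmem.2 (hdc i j (.hb (.to hij)) (hmem.1 hj)),
    fun i j hi hj hne hij =>
      (rBefore_iff_of_sortedLT hsorted).2 ⟨hi, hj, lt_of_le_of_ne hij.1 hne⟩,
    fun j _ _ hj i => lastWriteIn_iff_lastWrite hsorted hwr hj⟩
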